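/- For the EWL approach to the Battle of the Sexes game with payoff bimatrix rows ((4,2),(0,0)) and ((0,0),(2,4)), the strategy profile (U(0,π/8,0), U(0,π/8,0)) yields the payoff vector (3,3), which lies outside the noncooperative payoff region: there is no pair of probabilities (p,q) ∈ [0,1]² with (4pq, 2pq) + (2(1−p)(1−q), 4(1−p)(1−q)) = (3,3). -/

import Mathlib

open Real

/-- The EWL payoff vector for a 2×2 bimatrix game with payoff vectors
`P00 P01 P10 P11 : ℝ × ℝ`, at the profile `(U(θ1,α1,β1), U(θ2,α2,β2))`. -/
noncomputable def ewlV (P00 P01 P10 P11 : ℝ × ℝ) (θ1 α1 β1 θ2 α2 β2 : ℝ) : ℝ × ℝ :=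
  ((cos (α1 + α2) * cos (θ1/2) * cos (θ2/2) +
    sin (β1 + β2) * sin (θ1/2) * sin (θ2/2))^2) • P00 +
  ((sin (α2 - β1) * sin (θ1/2) * cos (θ2/2) +
    cos (α1 - β2) * cos (θ1/2) * sin (θ2/2))^2) • P01 +
  ((cos (α2 - β1) * sin (θ1/2) * cos (θ2/2) +
    sin (α1 - β2) * cos (θ1/2) * sin (θ2/2))^2) • P10 +
  ((cos (β1 + β2) * sin (θ1/2) * sin (θ2/2) -
    sin (α1 + α2) * cos (θ1/2) * cos (θ2/2))^2) • P11

/-! With `θ1 = θ2 = 0` only the outcomes `00` and `11` occur, with weights `cos² (α1 + α2)` and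
`sin² (α1 + α2)`; at `α1 + α2 = π/4` this is the even lottery, whose payoff `(3, 3)` would need
`pq = (1 - p)(1 - q) = 1/2` in a product lottery, while equal weights on `00` and `11` force
`p + q = 1` and hence `pq ≤ 1/4`. -/

theorem ewlV_of_theta_eq_zero (P00 P01 P10 P11 : ℝ × ℝ) (α1 β1 α2 β2 : ℝ) :
    ewlV P00 P01 P10 P11 0 α1 β1 0 α2 β2 =
      cos (α1 + α2) ^ 2 • P00 + sin (α1 + α2) ^ 2 • P11 := by
  simp [ewlV]

theorem ewlV_of_theta_eq_zero_of_add_eq_pi_div_four (P00 P01 P10 P11 : ℝ × ℝ)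
    {α1 α2 : ℝ} (β1 β2 : ℝ) (h : α1 + α2 = π / 4) :
    ewlV P00 P01 P10 P11 0 α1 β1 0 α2 β2 = (1 / 2 : ℝ) • (P00 + P11) := by
  have hsqrt : (√2 / 2) ^ 2 = (1 / 2 : ℝ) := by
    rw [div_pow, sq_sqrt zero_le_two]; norm_num
  rw [ewlV_of_theta_eq_zero, h, cos_pi_div_four, sin_pi_div_four, hsqrt, smul_add]

theorem mul_le_one_div_four_of_mul_eq_one_sub_mul_one_sub {p q : ℝ}
    (h : p * q = (1 - p) * (1 - q)) : p * q ≤ 1 / 4 := by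
  have hsum : q = 1 - p := by linarith
  subst hsum
  nlinarith [sq_nonneg (2 * p - 1)]

/-- In the EWL approach to Battle of the Sexes, the profile
`(U(0,π/8,0), U(0,π/8,0))` yields the payoff vector `(3,3)`, which is not in
the noncooperative payoff region. -/
theorem ewl_bos_outside_noncooperative :
    ewlV (4, 2) (0, 0) (0, 0) (2, 4) 0 (π/8) 0 0 (π/8) 0 = (3, 3) ∧
    ¬ ∃ p q : ℝ, p ∈ Set.Icc (0:ℝ) 1 ∧ q ∈ Set.Icc (0:ℝ) 1 ∧
        ((4 * (p * q), 2 * (p * q)) : ℝ × ℝ) +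
          (2 * ((1 - p) * (1 - q)), 4 * ((1 - p) * (1 - q))) = (3, 3) := by
  constructor
  · rw [ewlV_of_theta_eq_zero_of_add_eq_pi_div_four _ _ _ _ _ _ (by ring)]
    norm_num
  · rintro ⟨p, q, -, -, h⟩
    simp only [Prod.mk_add_mk, Prod.mk.injEq] at h
    have hpq : p * q = 1 / 2 := by linarith
    have h00 : (1 - p) * (1 - q) = 1 / 2 := by linarith
    have := mul_le_one_div_four_of_mul_eq_one_sub_mul_one_sub (hpq.trans h00.symm)
    linarith
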